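/- Consider a single LSTM layer with hidden-state update h⁺ = z∘φ(c⁺), where z = σ(W_z u + U_z h + b_z). Define σ̄_z = σ(M_z) with M_z the maximum row ℓ¹ norm of [W_z U_z b_z], and let h̄ = tanh(c̄) for some c̄ ≥ 0. Then for any two triples (c_a⁺, h_a, u_a) and (c_b⁺, h_b, u_b) with ‖c_a⁺‖∞ ≤ c̄, ‖c_b⁺‖∞ ≤ c̄, ‖h_a‖∞ ≤ 1, ‖h_b‖∞ ≤ 1, ‖u_a‖∞ ≤ 1, ‖u_b‖∞ ≤ 1, the updated hidden states h_a⁺ = z_a∘φ(c_a⁺) and h_b⁺ = z_b∘φ(c_b⁺) satisfy ‖h_a⁺ − h_b⁺‖₂ ≤ σ̄_z ‖c_a⁺ − c_b⁺‖₂ + (1/4) h̄ ( ‖U_z‖₂ ‖h_a − h_b‖₂ + ‖W_z‖₂ ‖u_a − u_b‖₂ ). -/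

import Mathlib

/-- The sigmoid activation function `σ(x) = 1/(1+e^{-x})`. -/
noncomputable def sigm (x : ℝ) : ℝ := 1 / (1 + Real.exp (-x))

/-- The maximum over rows of the ℓ¹ norm of the rows of the augmented matrix `[W U b]`. -/
noncomputable def augRowMax {n m p : ℕ} (W : Matrix (Fin n) (Fin m) ℝ)
    (U : Matrix (Fin n) (Fin p) ℝ) (b : Fin n → ℝ) : ℝ :=
  ⨆ j, (∑ i, |W j i| + ∑ i, |U j i| + |b j|)

/-- The Euclidean norm of a vector in `ℝ^n`. -/
noncomputable def norm2 {n : ℕ} (v : Fin n → ℝ) : ℝ := Real.sqrt (∑ i, (v i) ^ 2)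

/-- The spectral (induced 2-) norm of a real matrix. -/
noncomputable def opNorm2 {n m : ℕ} (A : Matrix (Fin n) (Fin m) ℝ) : ℝ :=
  ‖LinearMap.toContinuousLinearMap (Matrix.toEuclideanLin A)‖

/-!
Write `h_a⁺ − h_b⁺ = z_a ∘ (φ(c_a⁺) − φ(c_b⁺)) + (z_a − z_b) ∘ φ(c_b⁺)`. Since `‖u_a‖∞, ‖h_a‖∞ ≤ 1`,
every pre-activation of `z_a` is at most `M_z`, so `0 < z_a ≤ σ̄_z` by monotonicity of `σ`;
`tanh` is 1-Lipschitz and `|φ(c_b⁺)| ≤ h̄`; `σ` is 1/4-Lipschitz and the two pre-activations differ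
by `U_z (h_a − h_b) + W_z (u_a − u_b)`. The resulting coordinatewise bound passes to the
Euclidean norm by monotonicity and the triangle inequality, and the matrix terms are bounded by
spectral norms.
-/

namespace Real

theorem hasDerivAt_tanh (x : ℝ) : HasDerivAt tanh (1 - tanh x ^ 2) x := by
  have hcosh := (cosh_pos x).ne'
  rw [show tanh = sinh / cosh from funext tanh_eq_sinh_div_cosh]
  refine ((hasDerivAt_sinh x).div (hasDerivAt_cosh x) hcosh).congr_deriv ?_
  rw [Pi.div_apply]
  field_simp

theorem tanh_strictMono : StrictMono tanh :=
  strictMono_of_hasDerivAt_pos hasDerivAt_tanh fun x => by nlinarith [tanh_sq_lt_one x]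

theorem abs_tanh_le_tanh {x c : ℝ} (h : |x| ≤ c) : |tanh x| ≤ tanh c := by
  rw [abs_le] at h ⊢
  exact ⟨by simpa only [tanh_neg] using tanh_strictMono.monotone h.1, tanh_strictMono.monotone h.2⟩

theorem lipschitzWith_tanh : LipschitzWith 1 tanh :=
  lipschitzWith_of_nnnorm_deriv_le (fun x => (hasDerivAt_tanh x).differentiableAt) fun x => by
    rw [(hasDerivAt_tanh x).deriv, ← NNReal.coe_le_coe, coe_nnnorm, norm_eq_abs,
      NNReal.coe_one, abs_le]
    constructor <;> nlinarith [tanh_sq_lt_one x, sq_nonneg (tanh x)]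

theorem lipschitzWith_sigmoid : LipschitzWith 4⁻¹ sigmoid :=
  lipschitzWith_of_nnnorm_deriv_le differentiable_sigmoid fun x => by
    rw [(hasDerivAt_sigmoid x).deriv, ← NNReal.coe_le_coe, coe_nnnorm, norm_eq_abs,
      NNReal.coe_inv, NNReal.coe_ofNat, abs_le]
    constructor <;> nlinarith [sigmoid_pos x, sigmoid_lt_one x, sq_nonneg (sigmoid x - 2⁻¹)]

end Real

theorem sigm_eq_sigmoid : sigm = Real.sigmoid := by
  ext x
  rw [sigm, Real.sigmoid_def, one_div]

theorem LipschitzWith.abs_sub_le {f : ℝ → ℝ} {K : NNReal} (hf : LipschitzWith K f) (x y : ℝ) :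
    |f x - f y| ≤ K * |x - y| := by
  simpa only [Real.dist_eq] using hf.dist_le_mul x y

theorem norm2_eq_norm_toLp {n : ℕ} (v : Fin n → ℝ) : norm2 v = ‖WithLp.toLp 2 v‖ := by
  simp [norm2, EuclideanSpace.norm_eq]

theorem norm2_abs {n : ℕ} (v : Fin n → ℝ) : norm2 (fun j => |v j|) = norm2 v := by
  simp only [norm2, sq_abs]

theorem norm2_le_norm2_of_abs_le {n : ℕ} {a b : Fin n → ℝ} (h : ∀ j, |a j| ≤ b j) :
    norm2 a ≤ norm2 b :=
  Real.sqrt_le_sqrt <| Finset.sum_le_sum fun j _ => by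
    simpa only [sq_abs] using pow_le_pow_left₀ (abs_nonneg (a j)) (h j) 2

theorem norm2_le_of_abs_le_mul_add_mul {n : ℕ} {x y w : Fin n → ℝ} {s t : ℝ} (hs : 0 ≤ s)
    (ht : 0 ≤ t) (h : ∀ j, |x j| ≤ s * |y j| + t * |w j|) :
    norm2 x ≤ s * norm2 y + t * norm2 w := by
  calc norm2 x ≤ norm2 (s • (fun j => |y j|) + t • fun j => |w j|) := norm2_le_norm2_of_abs_le h
    _ ≤ s * norm2 (fun j => |y j|) + t * norm2 (fun j => |w j|) := by
      simp only [norm2_eq_norm_toLp, WithLp.toLp_add, WithLp.toLp_smul]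
      refine (norm_add_le _ _).trans ?_
      rw [norm_smul, norm_smul, Real.norm_of_nonneg hs, Real.norm_of_nonneg ht]
    _ = s * norm2 y + t * norm2 w := by rw [norm2_abs, norm2_abs]

theorem norm2_mulVec_le {n m : ℕ} (A : Matrix (Fin n) (Fin m) ℝ) (v : Fin m → ℝ) :
    norm2 (A.mulVec v) ≤ opNorm2 A * norm2 v := by
  rw [norm2_eq_norm_toLp, norm2_eq_norm_toLp]
  exact (LinearMap.toContinuousLinearMap (Matrix.toEuclideanLin A)).le_opNorm (WithLp.toLp 2 v)

theorem norm2_mulVec_add_mulVec_le {n m p : ℕ} (A : Matrix (Fin n) (Fin m) ℝ)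
    (B : Matrix (Fin n) (Fin p) ℝ) (v : Fin m → ℝ) (w : Fin p → ℝ) :
    norm2 (A.mulVec v + B.mulVec w) ≤ opNorm2 A * norm2 v + opNorm2 B * norm2 w := by
  calc norm2 (A.mulVec v + B.mulVec w) ≤ norm2 (A.mulVec v) + norm2 (B.mulVec w) := by
        simpa only [norm2_eq_norm_toLp, WithLp.toLp_add] using norm_add_le _ _
    _ ≤ _ := add_le_add (norm2_mulVec_le A v) (norm2_mulVec_le B w)

theorem mulVec_apply_le_sum_abs {ι κ : Type*} [Fintype κ] (A : Matrix ι κ ℝ) {v : κ → ℝ}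
    (hv : ‖v‖ ≤ 1) (j : ι) : (A.mulVec v) j ≤ ∑ i, |A j i| :=
  Finset.sum_le_sum fun i _ =>
    calc A j i * v i ≤ |A j i| * |v i| := (le_abs_self _).trans_eq (abs_mul _ _)
      _ ≤ |A j i| := mul_le_of_le_one_right (abs_nonneg _) ((norm_le_pi_norm v i).trans hv)

theorem le_augRowMax {n m p : ℕ} (W : Matrix (Fin n) (Fin m) ℝ) (U : Matrix (Fin n) (Fin p) ℝ)
    (b : Fin n → ℝ) (j : Fin n) : ∑ i, |W j i| + ∑ i, |U j i| + |b j| ≤ augRowMax W U b :=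
  le_ciSup (f := fun j => ∑ i, |W j i| + ∑ i, |U j i| + |b j|) (Set.finite_range _).bddAbove j

theorem preactivation_le_augRowMax {n m p : ℕ} (W : Matrix (Fin n) (Fin m) ℝ)
    (U : Matrix (Fin n) (Fin p) ℝ) (b : Fin n → ℝ) {u : Fin m → ℝ} {h : Fin p → ℝ}
    (hu : ‖u‖ ≤ 1) (hh : ‖h‖ ≤ 1) (j : Fin n) :
    (W.mulVec u + U.mulVec h + b) j ≤ augRowMax W U b := by
  calc (W.mulVec u + U.mulVec h + b) j = (W.mulVec u) j + (U.mulVec h) j + b j := rfl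
    _ ≤ ∑ i, |W j i| + ∑ i, |U j i| + |b j| := by
      gcongr
      · exact mulVec_apply_le_sum_abs W hu j
      · exact mulVec_apply_le_sum_abs U hh j
      · exact le_abs_self _
    _ ≤ augRowMax W U b := le_augRowMax W U b j

theorem preactivation_sub {n m p : ℕ} (W : Matrix (Fin n) (Fin m) ℝ)
    (U : Matrix (Fin n) (Fin p) ℝ) (b : Fin n → ℝ) (u u' : Fin m → ℝ) (h h' : Fin p → ℝ) :
    W.mulVec u + U.mulVec h + b - (W.mulVec u' + U.mulVec h' + b) =
      U.mulVec (h - h') + W.mulVec (u - u') := by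
  rw [Matrix.mulVec_sub, Matrix.mulVec_sub]
  abel

theorem abs_sigm_mul_tanh_sub_le {x y c d M r : ℝ} (hx : x ≤ M) (hd : |d| ≤ r) :
    |sigm x * Real.tanh c - sigm y * Real.tanh d| ≤
      sigm M * |c - d| + 1 / 4 * Real.tanh r * |x - y| := by
  rw [sigm_eq_sigmoid]
  calc |x.sigmoid * c.tanh - y.sigmoid * d.tanh|
      = |x.sigmoid * (c.tanh - d.tanh) + (x.sigmoid - y.sigmoid) * d.tanh| := by
        congr 1; ring
    _ ≤ |x.sigmoid * (c.tanh - d.tanh)| + |(x.sigmoid - y.sigmoid) * d.tanh| := abs_add_le _ _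
    _ = x.sigmoid * |c.tanh - d.tanh| + |x.sigmoid - y.sigmoid| * |d.tanh| := by
      rw [abs_mul, abs_mul, abs_of_nonneg (Real.sigmoid_nonneg x)]
    _ ≤ M.sigmoid * (1 * |c - d|) + (4⁻¹ * |x - y|) * r.tanh :=
      add_le_add
        (mul_le_mul (Real.sigmoid_le hx)
          (Real.lipschitzWith_tanh.abs_sub_le c d) (abs_nonneg _)
          (Real.sigmoid_nonneg M))
        (mul_le_mul (Real.lipschitzWith_sigmoid.abs_sub_le x y)
          (Real.abs_tanh_le_tanh hd) (abs_nonneg _) (by positivity))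
    _ = M.sigmoid * |c - d| + 1 / 4 * r.tanh * |x - y| := by ring

theorem stmt_10_general {nc nu : ℕ}
    (Wz : Matrix (Fin nc) (Fin nu) ℝ) (Uz : Matrix (Fin nc) (Fin nc) ℝ) (bz : Fin nc → ℝ)
    (σz cbar hbar : ℝ)
    (hσz : σz = sigm (augRowMax Wz Uz bz))
    (hhbar : hbar = Real.tanh cbar)
    (caplus cbplus ha hb : Fin nc → ℝ) (ua ub : Fin nu → ℝ)
    (hcbplus : ‖cbplus‖ ≤ cbar)
    (hha : ‖ha‖ ≤ 1)
    (hua : ‖ua‖ ≤ 1)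
    (haplus hbplus : Fin nc → ℝ)
    (hhaplus : haplus = fun j =>
      sigm ((Wz.mulVec ua + Uz.mulVec ha + bz) j) * Real.tanh (caplus j))
    (hhbplus : hbplus = fun j =>
      sigm ((Wz.mulVec ub + Uz.mulVec hb + bz) j) * Real.tanh (cbplus j)) :
    norm2 (fun j => haplus j - hbplus j) ≤
      σz * norm2 (fun j => caplus j - cbplus j) +
        (1 / 4) * hbar * (opNorm2 Uz * norm2 (fun j => ha j - hb j) +
          opNorm2 Wz * norm2 (fun j => ua j - ub j)) := by
  have hσz_nonneg : 0 ≤ σz := hσz ▸ sigm_eq_sigmoid ▸ Real.sigmoid_nonneg _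
  have hhbar_nonneg : 0 ≤ hbar :=
    hhbar ▸ Real.tanh_zero ▸ Real.tanh_strictMono.monotone ((norm_nonneg cbplus).trans hcbplus)
  have hpointwise : ∀ j, |haplus j - hbplus j| ≤ σz * |caplus j - cbplus j| +
      1 / 4 * hbar * |(Uz.mulVec (ha - hb) + Wz.mulVec (ua - ub)) j| := by
    intro j
    rw [hhaplus, hhbplus, hσz, hhbar, ← preactivation_sub Wz Uz bz ua ub ha hb]
    exact abs_sigm_mul_tanh_sub_le (preactivation_le_augRowMax Wz Uz bz hua hha j)
      ((norm_le_pi_norm cbplus j).trans hcbplus)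
  calc norm2 (fun j => haplus j - hbplus j)
      ≤ σz * norm2 (fun j => caplus j - cbplus j) +
          1 / 4 * hbar * norm2 (Uz.mulVec (ha - hb) + Wz.mulVec (ua - ub)) :=
        norm2_le_of_abs_le_mul_add_mul hσz_nonneg (by positivity) hpointwise
    _ ≤ _ := by
      gcongr
      exact norm2_mulVec_add_mulVec_le Uz Wz (ha - hb) (ua - ub)

/-- Incremental bound on the LSTM hidden-state update `h⁺ = z∘tanh(c⁺)`:
`‖h_a⁺ − h_b⁺‖₂ ≤ σ̄_z ‖c_a⁺ − c_b⁺‖₂ + (1/4) h̄ (‖U_z‖₂ ‖h_a − h_b‖₂ + ‖W_z‖₂ ‖u_a − u_b‖₂)`. -/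
theorem stmt_10 {nc nu : ℕ}
    (Wz : Matrix (Fin nc) (Fin nu) ℝ) (Uz : Matrix (Fin nc) (Fin nc) ℝ) (bz : Fin nc → ℝ)
    (σz cbar hbar : ℝ)
    (hσz : σz = sigm (augRowMax Wz Uz bz))
    (hcbar : 0 ≤ cbar)
    (hhbar : hbar = Real.tanh cbar)
    (caplus cbplus ha hb : Fin nc → ℝ) (ua ub : Fin nu → ℝ)
    (hcaplus : ‖caplus‖ ≤ cbar) (hcbplus : ‖cbplus‖ ≤ cbar)
    (hha : ‖ha‖ ≤ 1) (hhb : ‖hb‖ ≤ 1)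
    (hua : ‖ua‖ ≤ 1) (hub : ‖ub‖ ≤ 1)
    (haplus hbplus : Fin nc → ℝ)
    (hhaplus : haplus = fun j =>
      sigm ((Wz.mulVec ua + Uz.mulVec ha + bz) j) * Real.tanh (caplus j))
    (hhbplus : hbplus = fun j =>
      sigm ((Wz.mulVec ub + Uz.mulVec hb + bz) j) * Real.tanh (cbplus j)) :
    norm2 (fun j => haplus j - hbplus j) ≤
      σz * norm2 (fun j => caplus j - cbplus j) +
        (1 / 4) * hbar * (opNorm2 Uz * norm2 (fun j => ha j - hb j) +
          opNorm2 Wz * norm2 (fun j => ua j - ub j)) :=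
  stmt_10_general Wz Uz bz σz cbar hbar hσz hhbar caplus cbplus ha hb ua ub hcbplus hha hua haplus
    hbplus hhaplus hhbplus
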